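/- Let t > 0, λ ∈ ℂ with Re λ < -1/2, f ∈ L^∞[0,1] with lim_{s→0⁺} f(s) = L ≠ 0, and set g = g_λ f where g_λ(s) = s^{-(λ+1)}. Then g ∈ L^2[0,1] and the sequence e^{-ntλ} T(t)^n g converges to L g_λ in L^2[0,1] as n → ∞; in particular g_λ lies in the closed T(t)-invariant subspace generated by g. -/

import Mathlib

/-!
Since `g_λ` is an eigenfunction of each dilation, `e^{-ntλ} T(t)^n g = g_λ · f(e^{-nt} ·)`, so the
difference with `L g_λ` is `g_λ · (f(e^{-nt} ·) - L)`. It tends to `0` pointwise because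
`f(s) → L` as `s → 0⁺`, and it is dominated by `(‖f‖_∞ + |L|) |g_λ| ∈ L²`, so it tends to `0` in
`L²` by dominated convergence.
-/

open MeasureTheory Set Filter Topology
open scoped ENNReal

theorem tendsto_eLpNorm_zero_of_dominated {α E : Type*} [MeasurableSpace α] {μ : Measure α}
    [NormedAddCommGroup E] {p : ℝ≥0∞} (hp0 : p ≠ 0) (hp : p ≠ ∞) {F : ℕ → α → E}
    {G : α → ℝ} (hF : ∀ n, AEStronglyMeasurable (F n) μ) (hG : MemLp G p μ)
    (h_bound : ∀ n, ∀ᵐ x ∂μ, ‖F n x‖ ≤ G x)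
    (h_lim : ∀ᵐ x ∂μ, Tendsto (fun n => F n x) atTop (𝓝 0)) :
    Tendsto (fun n => eLpNorm (F n) p μ) atTop (𝓝 0) := by
  have hp_pos : 0 < p.toReal := ENNReal.toReal_pos hp0 hp
  have h_lint : Tendsto (fun n => ∫⁻ x, ‖F n x‖ₑ ^ p.toReal ∂μ) atTop (𝓝 0) := by
    have h := tendsto_lintegral_of_dominated_convergence' (f := fun _ => 0)
      (fun x => ‖G x‖ₑ ^ p.toReal)
      (fun n => (hF n).enorm.pow_const _)
      (fun n => (h_bound n).mono fun x hx =>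
        ENNReal.rpow_le_rpow (enorm_le_iff_norm_le.2 (hx.trans (Real.le_norm_self _))) hp_pos.le)
      (lintegral_rpow_enorm_lt_top_of_eLpNorm_lt_top hp0 hp hG.eLpNorm_lt_top).ne
      (h_lim.mono fun x hx => by
        simpa [ENNReal.zero_rpow_of_pos hp_pos] using hx.enorm.ennrpow_const p.toReal)
    simpa using h
  simp_rw [eLpNorm_eq_lintegral_rpow_enorm_toReal hp0 hp]
  simpa [ENNReal.zero_rpow_of_pos (inv_pos.2 hp_pos)] using h_lint.ennrpow_const (1 / p.toReal)

theorem memLp_ofReal_cpow_Ioc {p : ℝ≥0∞} (hp0 : p ≠ 0) (hp : p ≠ ∞) {a : ℂ}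
    (ha : -1 < p.toReal * a.re) :
    MemLp (fun s : ℝ => (s : ℂ) ^ a) p (volume.restrict (Ioc 0 1)) := by
  have h_meas : AEStronglyMeasurable (fun s : ℝ => (s : ℂ) ^ a) (volume.restrict (Ioc 0 1)) :=
    ContinuousOn.aestronglyMeasurable (fun x hx =>
      (Complex.continuousAt_ofReal_cpow_const x a (Or.inr hx.1.ne')).continuousWithinAt)
      measurableSet_Ioc
  rw [← integrable_norm_rpow_iff h_meas hp0 hp]
  have h_int : IntegrableOn (fun s : ℝ => s ^ (a.re * p.toReal)) (Ioc 0 1) :=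
    ((intervalIntegral.integrableOn_Ioo_rpow_iff one_pos).2 (by linarith)).congr_set_ae
      Ioo_ae_eq_Ioc.symm
  refine h_int.congr_fun (fun s hs => ?_) measurableSet_Ioc
  rw [Complex.norm_cpow_eq_rpow_re_of_pos hs.1, ← Real.rpow_mul hs.1.le]

theorem quasiMeasurePreserving_const_mul_restrict_Ioc {c : ℝ} (hc : c ∈ Ioc 0 1) :
    Measure.QuasiMeasurePreserving (fun s => c * s) (volume.restrict (Ioc 0 1))
      (volume.restrict (Ioc 0 1)) :=
  (Measure.quasiMeasurePreserving_smul volume hc.1.ne').restrict fun _ hs =>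
    ⟨mul_pos hc.1 hs.1, mul_le_one₀ hc.2 hs.1.le hs.2⟩

theorem tendsto_eLpNorm_mul_comp_const_mul_sub {p : ℝ≥0∞} (hp0 : p ≠ 0) (hp : p ≠ ∞)
    {g f : ℝ → ℂ} (hg : MemLp g p (volume.restrict (Ioc 0 1)))
    (hf : MemLp f ∞ (volume.restrict (Ioc 0 1))) {L : ℂ} (hlim : Tendsto f (𝓝[>] 0) (𝓝 L))
    {ε : ℕ → ℝ} (hε : ∀ n, ε n ∈ Ioc 0 1) (hε_lim : Tendsto ε atTop (𝓝 0)) :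
    Tendsto (fun n => eLpNorm (fun s => g s * (f (ε n * s) - L)) p (volume.restrict (Ioc 0 1)))
      atTop (𝓝 0) := by
  have hqmp n := quasiMeasurePreserving_const_mul_restrict_Ioc (hε n)
  refine tendsto_eLpNorm_zero_of_dominated hp0 hp
    (fun n => hg.1.mul ((hf.1.comp_quasiMeasurePreserving (hqmp n)).sub aestronglyMeasurable_const))
    (hg.norm.const_mul (lpNorm f ∞ (volume.restrict (Ioc 0 1)) + ‖L‖))
    (fun n => ?_) ?_
  · filter_upwards [(hqmp n).ae (ae_le_lpNorm_exponent_top hf)] with s hs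
    rw [norm_mul, mul_comm]
    gcongr
    exact (norm_sub_le _ _).trans (by gcongr)
  · filter_upwards [ae_restrict_mem measurableSet_Ioc] with s hs
    have h_arg : Tendsto (fun n => ε n * s) atTop (𝓝[>] 0) :=
      tendsto_nhdsWithin_of_tendsto_nhds_of_eventually_within _
        (by simpa using hε_lim.mul_const s) (Eventually.of_forall fun n => mul_pos (hε n).1 hs.1)
    simpa using ((hlim.comp h_arg).sub_const L).const_mul (g s)

theorem Complex.ofReal_exp_cpow (u : ℝ) (a : ℂ) : (Real.exp u : ℂ) ^ a = Complex.exp (u * a) := by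
  rw [Complex.ofReal_exp, Complex.cpow_def_of_ne_zero (Complex.exp_ne_zero _),
    Complex.log_exp (by simpa using Real.pi_pos) (by simpa using Real.pi_pos.le)]

theorem stmt19_general (t : ℝ) (ht : 0 < t) (lam : ℂ) (hl : lam.re < -(1/2))
    (f : ℝ → ℂ) (hf : MemLp f ⊤ (volume.restrict (Ioc (0:ℝ) 1)))
    (L : ℂ)
    (hlim : Filter.Tendsto f (nhdsWithin 0 (Ioi (0:ℝ))) (nhds L)) :
    let g : ℝ → ℂ := fun s => (s : ℂ) ^ (-(lam + 1)) * f s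
    MemLp g 2 (volume.restrict (Ioc (0:ℝ) 1)) ∧
    Filter.Tendsto (fun n : ℕ =>
        eLpNorm (fun s : ℝ =>
            Complex.exp (-((n : ℂ) * t * lam)) *
              ((Real.exp (-((n : ℝ) * t)) : ℂ) * g (Real.exp (-((n : ℝ) * t)) * s)) -
            L * (s : ℂ) ^ (-(lam + 1))) 2 (volume.restrict (Ioc (0:ℝ) 1)))
      Filter.atTop (nhds 0) := by
  intro g
  have h_pow : MemLp (fun s : ℝ => (s : ℂ) ^ (-(lam + 1))) 2 (volume.restrict (Ioc 0 1)) :=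
    memLp_ofReal_cpow_Ioc two_ne_zero ENNReal.ofNat_ne_top (by
      simp only [ENNReal.toReal_ofNat, Complex.neg_re, Complex.add_re, Complex.one_re]; linarith)
  refine ⟨hf.mul' h_pow, ?_⟩
  have hε (n : ℕ) : Real.exp (-((n : ℝ) * t)) ∈ Ioc 0 1 :=
    ⟨Real.exp_pos _, Real.exp_le_one_iff.2 (by nlinarith [n.cast_nonneg (α := ℝ)])⟩
  have hε_lim : Tendsto (fun n : ℕ => Real.exp (-((n : ℝ) * t))) atTop (𝓝 0) :=
    Real.tendsto_exp_atBot.comp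
      (tendsto_neg_atTop_atBot.comp (tendsto_natCast_atTop_atTop.atTop_mul_const ht))
  refine (tendsto_eLpNorm_mul_comp_const_mul_sub two_ne_zero ENNReal.ofNat_ne_top h_pow hf hlim
    hε hε_lim).congr fun n => eLpNorm_congr_ae ?_
  filter_upwards [ae_restrict_mem measurableSet_Ioc] with s hs
  simp only [g, Complex.ofReal_mul, Complex.mul_cpow_ofReal_nonneg (Real.exp_pos _).le hs.1.le,
    Complex.ofReal_exp_cpow]
  have h_cancel : Complex.exp (-((n : ℂ) * t * lam)) * (Real.exp (-((n : ℝ) * t)) : ℂ) *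
      Complex.exp ((-((n : ℝ) * t) : ℝ) * (-(lam + 1))) = 1 := by
    rw [Complex.ofReal_exp, ← Complex.exp_add, ← Complex.exp_add]
    convert Complex.exp_zero using 2
    push_cast; ring
  linear_combination -((s : ℂ) ^ (-(lam + 1)) * f (Real.exp (-((n : ℝ) * t)) * s)) * h_cancel

/-- Let `t > 0`, `Re λ < -1/2`, `f ∈ L^∞[0,1]` with `lim_{s→0⁺} f(s) = L ≠ 0`, and
`g = g_λ f` where `g_λ(s) = s^{-(λ+1)}`. Then `g ∈ L^2[0,1]` and
`e^{-ntλ} T(t)^n g = e^{-ntλ} T(nt) g → L g_λ` in `L^2[0,1]` as `n → ∞`; in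
particular `g_λ` lies in the closed `T(t)`-invariant subspace generated by `g`. -/
theorem stmt19 (t : ℝ) (ht : 0 < t) (lam : ℂ) (hl : lam.re < -(1/2))
    (f : ℝ → ℂ) (hf : MemLp f ⊤ (volume.restrict (Ioc (0:ℝ) 1)))
    (L : ℂ) (hL : L ≠ 0)
    (hlim : Filter.Tendsto f (nhdsWithin 0 (Ioi (0:ℝ))) (nhds L)) :
    let g : ℝ → ℂ := fun s => (s : ℂ) ^ (-(lam + 1)) * f s
    MemLp g 2 (volume.restrict (Ioc (0:ℝ) 1)) ∧
    Filter.Tendsto (fun n : ℕ =>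
        eLpNorm (fun s : ℝ =>
            Complex.exp (-((n : ℂ) * t * lam)) *
              ((Real.exp (-((n : ℝ) * t)) : ℂ) * g (Real.exp (-((n : ℝ) * t)) * s)) -
            L * (s : ℂ) ^ (-(lam + 1))) 2 (volume.restrict (Ioc (0:ℝ) 1)))
      Filter.atTop (nhds 0) :=
  stmt19_general t ht lam hl f hf L hlim
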